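/- arXiv:2302.11961 — 2 statements merged into one kernel-verified Lean document; each statement's English description precedes it below -/
import Mathlib

section
/- If σ² : Θ × X → ℝ is continuous in θ and monotone in θ (i.e., θ ≤ θ' componentwise implies σ²(θ,x) ≤ σ²(θ',x) for all x), and β, θ̂ : ℝ → ℝ×Θ are functions with β strictly monotone increasing, θ̂ monotone increasing on {δ : β(δ) > 0} and monotone decreasing on {δ : β(δ) < 0}, then for any fixed x and c : ℝ, the map δ ↦ c − β(δ)·σ(θ̂(δ), x) is strictly monotone decreasing in δ, where σ(θ,x) = sqrt(σ²(θ,x)) and σ(θ,x) > 0 for all θ, x. -/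
/-- If `σ²` is continuous and monotone in the hyperparameters `θ` (componentwise
order on `Θ = Fin p → ℝ`) and strictly positive, `β` is strictly increasing, and `θ̂` is
monotone increasing where `β > 0` and monotone decreasing where `β < 0`, then
`δ ↦ c − β(δ)·σ(θ̂(δ), x)` is strictly decreasing, where `σ = sqrt σ²`. -/
theorem stmt_0 {p : ℕ} {X : Type*}
    (σsq : (Fin p → ℝ) → X → ℝ)
    (hcont : ∀ x, Continuous fun θ => σsq θ x)
    (hpos : ∀ θ x, 0 < σsq θ x)
    (hmono : ∀ x, Monotone fun θ => σsq θ x)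
    (β : ℝ → ℝ) (θhat : ℝ → (Fin p → ℝ))
    (hβ : StrictMono β)
    (hθpos : MonotoneOn θhat {δ | 0 < β δ})
    (hθneg : AntitoneOn θhat {δ | β δ < 0})
    (x : X) (c : ℝ) :
    StrictAnti fun δ => c - β δ * Real.sqrt (σsq (θhat δ) x) := by
  intro a b hab
  simp only
  have h := hβ hab
  have sa : 0 < Real.sqrt (σsq (θhat a) x) := Real.sqrt_pos.mpr (hpos _ _)
  have sb : 0 < Real.sqrt (σsq (θhat b) x) := Real.sqrt_pos.mpr (hpos _ _)
  have key : β a * Real.sqrt (σsq (θhat a) x) < β b * Real.sqrt (σsq (θhat b) x) := by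
    rcases lt_trichotomy (β b) 0 with hb | hb | hb
    · have ha : β a < 0 := h.trans hb
      have hθ : θhat b ≤ θhat a := hθneg ha hb hab.le
      have hs : Real.sqrt (σsq (θhat b) x) ≤ Real.sqrt (σsq (θhat a) x) :=
        Real.sqrt_le_sqrt (hmono x hθ)
      calc β a * Real.sqrt (σsq (θhat a) x)
          ≤ β a * Real.sqrt (σsq (θhat b) x) := mul_le_mul_of_nonpos_left hs ha.le
        _ < β b * Real.sqrt (σsq (θhat b) x) := mul_lt_mul_of_pos_right h sb
    · have ha : β a < 0 := h.trans_le hb.le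
      rw [hb, zero_mul]
      exact mul_neg_of_neg_of_pos ha sa
    · rcases lt_trichotomy (β a) 0 with ha | ha | ha
      · exact (mul_neg_of_neg_of_pos ha sa).trans (mul_pos hb sb)
      · rw [ha, zero_mul]; exact mul_pos hb sb
      · have hθ : θhat a ≤ θhat b := hθpos ha hb hab.le
        have hs : Real.sqrt (σsq (θhat a) x) ≤ Real.sqrt (σsq (θhat b) x) :=
          Real.sqrt_le_sqrt (hmono x hθ)
        calc β a * Real.sqrt (σsq (θhat a) x)
            < β b * Real.sqrt (σsq (θhat a) x) := mul_lt_mul_of_pos_right h sa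
          _ ≤ β b * Real.sqrt (σsq (θhat b) x) := mul_le_mul_of_nonneg_left hs hb.le
  linarith
end

section
/- For a Gaussian process with kernel k(θ, x, x') = θ · k₀(x, x') where θ > 0 is a signal-variance hyperparameter and k₀ is a fixed positive-definite kernel, the posterior variance σ²(θ, x*) = θ k₀(x*,x*) − θ² k₀(x*)ᵀ(θ K₀ + σ₀² I)⁻¹ k₀(x*) + σ₀² is monotone nondecreasing in θ > 0, for any training inputs x₁,…,x_N, noise variance σ₀² > 0, and test input x*. -/
/-!
For a fixed weight vector `w`, the mean squared error of the linear predictor `wᵀy` of `f(x*)`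
is `θ (k₀(x*,x*) − 2 k₀(x*)ᵀw + wᵀK₀w) + σ₀² wᵀw`. The bracket is the prior variance of
`f(x*) − wᵀf(X)` under `k₀`, hence nonnegative, so each such error is nondecreasing in `θ`.
Completing the square shows that the posterior variance (less the noise `σ₀²`) is the minimum of
these errors over `w`, and a pointwise minimum of nondecreasing functions is nondecreasing.
-/

namespace Matrix

variable {n : Type*}

lemma posDef_smul_add_smul_one [DecidableEq n] {K : Matrix n n ℝ} (hK : K.PosSemidef)
    {θ s : ℝ} (hθ : 0 ≤ θ) (hs : 0 < s) : (θ • K + s • (1 : Matrix n n ℝ)).PosDef :=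
  PosDef.posSemidef_add (hK.smul hθ) (PosDef.one.smul hs)

variable [Fintype n] [DecidableEq n]

/-- The maximum of `2 bᵀw − wᵀAw` is attained at `w = A⁻¹b`. -/
theorem PosDef.isGreatest_dotProduct_inv_mulVec {A : Matrix n n ℝ} (hA : A.PosDef) (b : n → ℝ) :
    IsGreatest (Set.range fun w => 2 * (b ⬝ᵥ w) - w ⬝ᵥ A *ᵥ w) (b ⬝ᵥ A⁻¹ *ᵥ b) := by
  set u := A⁻¹ *ᵥ b
  have hAu : A *ᵥ u = b := by
    rw [mulVec_mulVec, mul_nonsing_inv _ ((isUnit_iff_isUnit_det A).mp hA.isUnit), one_mulVec]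
  refine ⟨⟨u, ?_⟩, ?_⟩
  · simp only [hAu, dotProduct_comm u b]
    ring
  · rintro _ ⟨w, rfl⟩
    have hsymm : u ⬝ᵥ A *ᵥ w = w ⬝ᵥ b := by
      rw [dotProduct_mulVec, ← mulVec_transpose, ← conjTranspose_eq_transpose_of_trivial,
        hA.isHermitian.eq, hAu, dotProduct_comm]
    have hsquare := hA.posSemidef.dotProduct_mulVec_nonneg (w - u)
    simp only [star_trivial, mulVec_sub, dotProduct_sub, sub_dotProduct, hAu, hsymm] at hsquare
    linarith [dotProduct_comm w b, dotProduct_comm u b]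

end Matrix

open Matrix

section SignalVariance

variable {n : Type*} [Fintype n] [DecidableEq n]

/-- Mean squared error of predicting `f(x*)` by `wᵀy`, where `f` has prior covariance `θ k₀`
and `y = f(X) + ε` with noise covariance `s I`; here `K = K₀`, `k = k₀(x*)`,
`k00 = k₀(x*,x*)`. -/
def linearPredictorRisk (K : Matrix n n ℝ) (k : n → ℝ) (k00 θ s : ℝ) (w : n → ℝ) : ℝ :=
  θ * (k00 - 2 * (k ⬝ᵥ w) + w ⬝ᵥ K *ᵥ w) + s * (w ⬝ᵥ w)

theorem isLeast_range_linearPredictorRisk {K : Matrix n n ℝ} (hK : K.PosSemidef) (k : n → ℝ)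
    (k00 : ℝ) {θ s : ℝ} (hθ : 0 ≤ θ) (hs : 0 < s) :
    IsLeast (Set.range (linearPredictorRisk K k k00 θ s))
      (θ * k00 - θ ^ 2 * (k ⬝ᵥ (θ • K + s • (1 : Matrix n n ℝ))⁻¹ *ᵥ k)) := by
  have hmax := (posDef_smul_add_smul_one hK hθ hs).isGreatest_dotProduct_inv_mulVec (θ • k)
  set A := θ • K + s • (1 : Matrix n n ℝ)
  have hval : θ • k ⬝ᵥ A⁻¹ *ᵥ (θ • k) = θ ^ 2 * (k ⬝ᵥ A⁻¹ *ᵥ k) := by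
    rw [mulVec_smul, dotProduct_smul, smul_dotProduct, smul_eq_mul, smul_eq_mul]
    ring
  have hrisk : ∀ w, linearPredictorRisk K k k00 θ s w =
      θ * k00 - (2 * (θ • k ⬝ᵥ w) - w ⬝ᵥ A *ᵥ w) := by
    intro w
    simp only [linearPredictorRisk, A, add_mulVec, smul_mulVec, one_mulVec, dotProduct_add,
      dotProduct_smul, smul_dotProduct, smul_eq_mul]
    ring
  rw [hval] at hmax
  refine ⟨?_, ?_⟩
  · obtain ⟨w, hw⟩ := hmax.1
    exact ⟨w, (hrisk w).trans (congrArg (θ * k00 - ·) hw)⟩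
  · rintro _ ⟨w, rfl⟩
    rw [hrisk]
    linarith [hmax.2 ⟨w, rfl⟩]

end SignalVariance

/-- for the kernel `k(θ,·,·) = θ·k₀(·,·)` with signal variance `θ > 0`, the GP
posterior variance `θ k₀(x*,x*) − θ² k₀(x*)ᵀ(θK₀ + σ₀²I)⁻¹ k₀(x*) + σ₀²` is monotone
nondecreasing in `θ`. The PSD structure of the kernel is encoded by the bordered Gram
quadratic-form condition `hGram`. -/
theorem stmt_8 (N : ℕ) (K₀ : Matrix (Fin N) (Fin N) ℝ) (hK₀ : K₀.PosSemidef)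
    (k : Fin N → ℝ) (k00 : ℝ)
    (hGram : ∀ (v : Fin N → ℝ) (t : ℝ),
      0 ≤ v ⬝ᵥ K₀.mulVec v + 2 * t * (k ⬝ᵥ v) + t ^ 2 * k00)
    (σ0 : ℝ) (hσ0 : 0 < σ0) :
    ∀ θ θ' : ℝ, 0 < θ → θ ≤ θ' →
      θ * k00 - θ ^ 2 * (k ⬝ᵥ (θ • K₀ + σ0 ^ 2 • (1 : Matrix (Fin N) (Fin N) ℝ))⁻¹.mulVec k)
          + σ0 ^ 2
        ≤ θ' * k00
            - θ' ^ 2 * (k ⬝ᵥ (θ' • K₀ + σ0 ^ 2 • (1 : Matrix (Fin N) (Fin N) ℝ))⁻¹.mulVec k)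
            + σ0 ^ 2 := by
  intro θ θ' hθ hle
  have hs : 0 < σ0 ^ 2 := pow_pos hσ0 2
  obtain ⟨w, hw⟩ := (isLeast_range_linearPredictorRisk hK₀ k k00 (hθ.le.trans hle) hs).1
  have hprior : 0 ≤ k00 - 2 * (k ⬝ᵥ w) + w ⬝ᵥ K₀ *ᵥ w := by
    have := hGram (-w) 1
    simp only [mulVec_neg, neg_dotProduct, dotProduct_neg, neg_neg] at this
    linarith
  gcongr ?_ + _
  calc θ * k00 - θ ^ 2 * (k ⬝ᵥ (θ • K₀ + σ0 ^ 2 • 1)⁻¹ *ᵥ k)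
      ≤ linearPredictorRisk K₀ k k00 θ (σ0 ^ 2) w :=
        (isLeast_range_linearPredictorRisk hK₀ k k00 hθ.le hs).2 ⟨w, rfl⟩
    _ ≤ linearPredictorRisk K₀ k k00 θ' (σ0 ^ 2) w := by
        unfold linearPredictorRisk
        gcongr
    _ = _ := hw
end
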